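/- arXiv:2207.14805 — 6 statements merged into one kernel-verified Lean document; each statement's English description precedes it below -/
import Mathlib

section
/- Let (T,r) be a metric tree (a metric space satisfying the four-point condition and admitting branch points) with branch point map c_{(T,r)}. Then c_{(T,r)} is symmetric and satisfies the axioms of an algebraic tree: (2pc) c(x,y,y)=y, (3pc) c(x,y,c(x,y,z))=c(x,y,z), and (4pc) c(x1,x2,x3) ∈ {c(x1,x2,x4), c(x1,x3,x4), c(x2,x3,x4)}. -/
/-!
The distance from `x` to a branch point of `x, y, z` is forced to be the Gromov product
`(y·z)_x`, and the four-point condition applied to `x, y` and two candidate branch points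
then puts them at distance `0`: branch points are unique. Symmetry, (2pc) and (3pc) follow by
exhibiting the expected point as a branch point. For (4pc), the four-point condition says that
the largest of the three pair sums of `x₁, …, x₄` is attained twice. An equality such as
`d(x₁,x₃) + d(x₂,x₄) = d(x₁,x₄) + d(x₂,x₃)` reads `d(x₁,x₃) - d(x₂,x₃) = d(x₁,x₄) - d(x₂,x₄)`:
seen from `x₁` and `x₂`, the points `x₃` and `x₄` branch off at the same place, and the
four-point condition once more shows that `c(x₁,x₂,x₄)` is a branch point of `x₁, x₂, x₃`.
-/

lemma eq_or_eq_or_eq_of_le_max {α : Type*} [LinearOrder α] {a b c : α}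
    (ha : a ≤ max b c) (hb : b ≤ max a c) (hc : c ≤ max a b) :
    b = c ∨ a = b ∨ a = c := by
  grind

def FourPointCondition (T : Type*) [MetricSpace T] : Prop :=
  ∀ x₁ x₂ x₃ x₄ : T,
    dist x₁ x₂ + dist x₃ x₄ ≤ max (dist x₁ x₃ + dist x₂ x₄) (dist x₁ x₄ + dist x₂ x₃)

section

variable {T : Type*} [MetricSpace T]

def IsBranchPoint (x y z p : T) : Prop :=
  dist x p + dist p y = dist x y ∧ dist x p + dist p z = dist x z ∧
    dist y p + dist p z = dist y z

lemma FourPointCondition.pair_sums_eq (h4 : FourPointCondition T) (x₁ x₂ x₃ x₄ : T) :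
    dist x₁ x₃ + dist x₂ x₄ = dist x₁ x₄ + dist x₂ x₃ ∨
      dist x₁ x₂ + dist x₃ x₄ = dist x₁ x₃ + dist x₂ x₄ ∨
      dist x₁ x₂ + dist x₃ x₄ = dist x₁ x₄ + dist x₂ x₃ := by
  refine eq_or_eq_or_eq_of_le_max (h4 x₁ x₂ x₃ x₄) ?_ ?_
  · simpa only [dist_comm x₃ x₂] using h4 x₁ x₃ x₂ x₄
  · simpa only [dist_comm x₄ x₂, dist_comm x₄ x₃] using h4 x₁ x₄ x₂ x₃

namespace IsBranchPoint

variable {x y z p : T}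

lemma swap_left (hp : IsBranchPoint x y z p) : IsBranchPoint y x z p := by
  obtain ⟨hxy, hxz, hyz⟩ := hp
  exact ⟨by linarith [dist_comm x p, dist_comm p y, dist_comm x y], hyz, hxz⟩

lemma swap_right (hp : IsBranchPoint x y z p) : IsBranchPoint x z y p :=
  ⟨hp.2.1, hp.1, by linarith [hp.2.2, dist_comm y p, dist_comm p z, dist_comm y z]⟩

lemma of_dist_add_dist_eq (h : dist x p + dist p y = dist x y) : IsBranchPoint x y p p :=
  ⟨h, by simp, by simp⟩

lemma two_mul_dist_left (hp : IsBranchPoint x y z p) :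
    2 * dist x p = dist x y + dist x z - dist y z := by
  obtain ⟨hxy, hxz, hyz⟩ := hp
  linarith [dist_comm y p]

lemma eq (h4 : FourPointCondition T) {q : T} (hp : IsBranchPoint x y z p)
    (hq : IsBranchPoint x y z q) : p = q := by
  have hxpq : dist x p = dist x q := by linarith [hp.two_mul_dist_left, hq.two_mul_dist_left]
  have hmax : max (dist x p + dist y q) (dist x q + dist y p) ≤ dist x y :=
    max_le (by linarith [hq.1, dist_comm y q]) (by linarith [hp.1, dist_comm y p])
  exact dist_le_zero.mp (by linarith [h4 x y p q])

lemma of_dist_sub_dist_eq (h4 : FourPointCondition T) {u : T} (hp : IsBranchPoint x y u p)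
    (hzu : dist x z - dist y z = dist x u - dist y u) : IsBranchPoint x y z p := by
  have hxp := hp.two_mul_dist_left
  have hyp := hp.swap_left.two_mul_dist_left
  have hsums : dist p x + dist z y = dist p y + dist z x := by
    linarith [dist_comm p x, dist_comm p y, dist_comm x y, dist_comm z x, dist_comm z y]
  have hpz : dist p z ≤ dist x z - dist x p := by
    have := h4 p z x y
    rw [hsums, max_self] at this
    linarith [hp.1, dist_comm z x, dist_comm p x, dist_comm p y]
  have hxz : dist x p + dist p z = dist x z := le_antisymm (by linarith) (dist_triangle x p z)
  exact ⟨hp.1, hxz, by linarith [hp.1, dist_comm y p]⟩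

end IsBranchPoint

variable (h4 : FourPointCondition T) {c : T → T → T → T}
  (hc : ∀ x y z, IsBranchPoint x y z (c x y z))
include h4 hc

lemma branchPoint_eq_of_isBranchPoint {x y z p : T} (hp : IsBranchPoint x y z p) :
    c x y z = p :=
  (hc x y z).eq h4 hp

lemma branchPoint_swap_left (x y z : T) : c x y z = c y x z :=
  branchPoint_eq_of_isBranchPoint h4 hc (hc y x z).swap_left

lemma branchPoint_swap_right (x y z : T) : c x y z = c x z y :=
  branchPoint_eq_of_isBranchPoint h4 hc (hc x z y).swap_right

lemma branchPoint_self_right (x y : T) : c x y y = y :=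
  branchPoint_eq_of_isBranchPoint h4 hc (.of_dist_add_dist_eq (by simp))

lemma branchPoint_branchPoint (x y z : T) : c x y (c x y z) = c x y z :=
  branchPoint_eq_of_isBranchPoint h4 hc (.of_dist_add_dist_eq (hc x y z).1)

lemma branchPoint_eq_or_eq_or_eq (x₁ x₂ x₃ x₄ : T) :
    c x₁ x₂ x₃ = c x₁ x₂ x₄ ∨ c x₁ x₂ x₃ = c x₁ x₃ x₄ ∨ c x₁ x₂ x₃ = c x₂ x₃ x₄ := by
  rcases h4.pair_sums_eq x₁ x₂ x₃ x₄ with h | h | h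
  · exact Or.inl <| branchPoint_eq_of_isBranchPoint h4 hc <|
      (hc x₁ x₂ x₄).of_dist_sub_dist_eq h4 (by linarith)
  · refine Or.inr <| Or.inr <| branchPoint_eq_of_isBranchPoint h4 hc ?_
    have : IsBranchPoint x₂ x₃ x₁ (c x₂ x₃ x₄) :=
      (hc x₂ x₃ x₄).of_dist_sub_dist_eq h4 (by linarith [dist_comm x₁ x₂, dist_comm x₁ x₃])
    exact this.swap_right.swap_left
  · refine Or.inr <| Or.inl <| branchPoint_eq_of_isBranchPoint h4 hc ?_
    have : IsBranchPoint x₁ x₃ x₂ (c x₁ x₃ x₄) :=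
      (hc x₁ x₃ x₄).of_dist_sub_dist_eq h4 (by linarith [dist_comm x₂ x₃, dist_comm x₃ x₄])
    exact this.swap_right

end

/-- The branch point map of a metric tree satisfies the axioms of an algebraic
tree: symmetry, (2pc), (3pc) and (4pc). -/
theorem metric_tree_branch_point_map_is_algebraic_tree {T : Type*} [MetricSpace T]
    (h4pt : ∀ x1 x2 x3 x4 : T,
      dist x1 x2 + dist x3 x4 ≤ max (dist x1 x3 + dist x2 x4) (dist x1 x4 + dist x2 x3))
    (c : T → T → T → T)
    (hbp : ∀ x1 x2 x3 : T,
      dist x1 (c x1 x2 x3) + dist (c x1 x2 x3) x2 = dist x1 x2 ∧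
      dist x1 (c x1 x2 x3) + dist (c x1 x2 x3) x3 = dist x1 x3 ∧
      dist x2 (c x1 x2 x3) + dist (c x1 x2 x3) x3 = dist x2 x3) :
    (∀ x y z : T, c x y z = c y x z ∧ c x y z = c x z y) ∧
    (∀ x y : T, c x y y = y) ∧
    (∀ x y z : T, c x y (c x y z) = c x y z) ∧
    (∀ x1 x2 x3 x4 : T,
      c x1 x2 x3 = c x1 x2 x4 ∨ c x1 x2 x3 = c x1 x3 x4 ∨ c x1 x2 x3 = c x2 x3 x4) :=
  ⟨fun x y z => ⟨branchPoint_swap_left h4pt hbp x y z, branchPoint_swap_right h4pt hbp x y z⟩,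
    branchPoint_self_right h4pt hbp, branchPoint_branchPoint h4pt hbp,
    branchPoint_eq_or_eq_or_eq h4pt hbp⟩
end

section
/- Let (T,c) be an algebraic tree and x ∈ T. Define, for y,z ∈ T∖{x}, y ∼_x z iff c(x,y,z) ≠ x. Then ∼_x is an equivalence relation on T∖{x}. -/
/-! If `c x y w = x`, then by (4pc) `x` equals one of `c x y z`, `c x w z`, `c y w z`; in the last
case (3pc) applied to `c y z w = x` gives `c y z x = x`, i.e. `c x y z = x`. This is transitivity of
`∼_x` in contrapositive form; reflexivity and symmetry are (2pc) and the symmetry of `c`. -/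

section AlgebraicTree

variable {T : Type*} {c : T → T → T → T}

theorem median_self_of_median_eq (hsym : ∀ x y z : T, c x y z = c y x z ∧ c x y z = c x z y)
    (h3pc : ∀ x y z : T, c x y (c x y z) = c x y z) {x y z w : T} (h : c y z w = x) :
    c x y z = x := by
  calc c x y z = c y z x := by rw [(hsym x y z).1, (hsym y x z).2]
    _ = c y z (c y z w) := by rw [h]
    _ = x := by rw [h3pc, h]

theorem median_self_left_or_right (hsym : ∀ x y z : T, c x y z = c y x z ∧ c x y z = c x z y)
    (h3pc : ∀ x y z : T, c x y (c x y z) = c x y z)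
    (h4pc : ∀ x1 x2 x3 x4 : T,
      c x1 x2 x3 = c x1 x2 x4 ∨ c x1 x2 x3 = c x1 x3 x4 ∨ c x1 x2 x3 = c x2 x3 x4)
    {x y z w : T} (h : c x y w = x) : c x y z = x ∨ c x z w = x := by
  rcases h4pc x y w z with hyz | hwz | hywz
  · exact .inl (hyz ▸ h)
  · exact .inr ((hsym x z w).2.trans (hwz ▸ h))
  · exact .inl (median_self_of_median_eq hsym h3pc ((hsym y z w).2.trans (hywz ▸ h)))

end AlgebraicTree

/-- In an algebraic tree `(T,c)`, for each `x`, the relation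
`y ∼_x z ↔ c x y z ≠ x` is an equivalence relation on `T \ {x}`. -/
theorem component_relation_is_equivalence {T : Type*} (c : T → T → T → T)
    (hsym : ∀ x y z : T, c x y z = c y x z ∧ c x y z = c x z y)
    (h2pc : ∀ x y : T, c x y y = y)
    (h3pc : ∀ x y z : T, c x y (c x y z) = c x y z)
    (h4pc : ∀ x1 x2 x3 x4 : T,
      c x1 x2 x3 = c x1 x2 x4 ∨ c x1 x2 x3 = c x1 x3 x4 ∨ c x1 x2 x3 = c x2 x3 x4)
    (x : T) :
    (∀ y : T, y ≠ x → c x y y ≠ x) ∧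
    (∀ y z : T, y ≠ x → z ≠ x → c x y z ≠ x → c x z y ≠ x) ∧
    (∀ y z w : T, y ≠ x → z ≠ x → w ≠ x → c x y z ≠ x → c x z w ≠ x → c x y w ≠ x) := by
  refine ⟨fun y hy => by rwa [h2pc], fun y z _ _ hyz => by rwa [← (hsym x y z).2], ?_⟩
  intro y z w _ _ _ hyz hzw hyw
  exact (median_self_left_or_right hsym h3pc h4pc hyw).elim hyz hzw
end

section
/- Let (T,c) and (T̂,ĉ) be algebraic trees and f : T → T̂. Then f is a tree homomorphism, i.e., f(c(x,y,z)) = ĉ(f(x),f(y),f(z)) for all x,y,z, if and only if f([x,y]) ⊆ [f(x),f(y)] for all x,y ∈ T, where [x,y] := {z : c(x,y,z)=z}. -/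
/-! The median `c x y z` is the only point lying in all three intervals `[x,y]`, `[x,z]`, `[y,z]`:
it lies in them by symmetry and (3pc), and (4pc) forces every common point to be it. A map
sending intervals into intervals therefore sends `c x y z` into the three intervals spanned by
`f x`, `f y`, `f z`, i.e. onto their median. -/

namespace AlgebraicTree

variable {T : Type*} (c : T → T → T → T)

theorem eq_median_of_mem_intervals
    (h4pc : ∀ x1 x2 x3 x4 : T,
      c x1 x2 x3 = c x1 x2 x4 ∨ c x1 x2 x3 = c x1 x3 x4 ∨ c x1 x2 x3 = c x2 x3 x4)
    {x y z w : T} (hxy : c x y w = w) (hxz : c x z w = w) (hyz : c y z w = w) :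
    c x y z = w := by
  rcases h4pc x y z w with h | h | h <;> rw [h] <;> assumption

theorem median_mem_interval_left
    (hsym : ∀ x y z : T, c x y z = c y x z ∧ c x y z = c x z y)
    (h3pc : ∀ x y z : T, c x y (c x y z) = c x y z) (x y z : T) :
    c x z (c x y z) = c x y z := by
  rw [(hsym x y z).2]
  exact h3pc x z y

theorem median_mem_interval_right
    (hsym : ∀ x y z : T, c x y z = c y x z ∧ c x y z = c x z y)
    (h3pc : ∀ x y z : T, c x y (c x y z) = c x y z) (x y z : T) :
    c y z (c x y z) = c x y z := by
  rw [(hsym x y z).1, (hsym y x z).2]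
  exact h3pc y z x

end AlgebraicTree

open AlgebraicTree in
theorem tree_homomorphism_iff_interval_preserving_general {T T' : Type*}
    (c : T → T → T → T) (c' : T' → T' → T' → T')
    (hsym : ∀ x y z : T, c x y z = c y x z ∧ c x y z = c x z y)
    (h3pc : ∀ x y z : T, c x y (c x y z) = c x y z)
    (h4pc' : ∀ x1 x2 x3 x4 : T',
      c' x1 x2 x3 = c' x1 x2 x4 ∨ c' x1 x2 x3 = c' x1 x3 x4 ∨ c' x1 x2 x3 = c' x2 x3 x4)
    (f : T → T') :
    (∀ x y z : T, f (c x y z) = c' (f x) (f y) (f z)) ↔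
      (∀ x y : T, f '' {z : T | c x y z = z} ⊆ {z : T' | c' (f x) (f y) z = z}) := by
  constructor
  · rintro hf x y _ ⟨z, hz, rfl⟩
    change c' (f x) (f y) (f z) = f z
    rw [← hf, hz]
  · intro hf x y z
    refine (eq_median_of_mem_intervals c' h4pc' ?_ ?_ ?_).symm
    · exact hf x y ⟨_, h3pc x y z, rfl⟩
    · exact hf x z ⟨_, median_mem_interval_left c hsym h3pc x y z, rfl⟩
    · exact hf y z ⟨_, median_mem_interval_right c hsym h3pc x y z, rfl⟩

/-- A map between algebraic trees is a tree homomorphism if and only if it maps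
intervals into intervals. -/
theorem tree_homomorphism_iff_interval_preserving {T T' : Type*}
    (c : T → T → T → T) (c' : T' → T' → T' → T')
    (hsym : ∀ x y z : T, c x y z = c y x z ∧ c x y z = c x z y)
    (h2pc : ∀ x y : T, c x y y = y)
    (h3pc : ∀ x y z : T, c x y (c x y z) = c x y z)
    (h4pc : ∀ x1 x2 x3 x4 : T,
      c x1 x2 x3 = c x1 x2 x4 ∨ c x1 x2 x3 = c x1 x3 x4 ∨ c x1 x2 x3 = c x2 x3 x4)
    (hsym' : ∀ x y z : T', c' x y z = c' y x z ∧ c' x y z = c' x z y)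
    (h2pc' : ∀ x y : T', c' x y y = y)
    (h3pc' : ∀ x y z : T', c' x y (c' x y z) = c' x y z)
    (h4pc' : ∀ x1 x2 x3 x4 : T',
      c' x1 x2 x3 = c' x1 x2 x4 ∨ c' x1 x2 x3 = c' x1 x3 x4 ∨ c' x1 x2 x3 = c' x2 x3 x4)
    (f : T → T') :
    (∀ x y z : T, f (c x y z) = c' (f x) (f y) (f z)) ↔
      (∀ x y : T, f '' {z : T | c x y z = z} ⊆ {z : T' | c' (f x) (f y) z = z}) :=
  tree_homomorphism_iff_interval_preserving_general c c' hsym h3pc h4pc' f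
end

section
/- Let (T,c) be an algebraic tree, ξ a Borel measure on T (with respect to the component topology) that is finite on every interval [x,y]. Then r_ξ(x,y) := ξ([x,y]) − ½ξ({x}) − ½ξ({y}) defines a pseudometric on T. -/
/-!
An interval `[x, z]` is covered by `[x, y] ∪ [y, z]`, and `y` lies in both. Singletons are closed
in the component topology, hence Borel, so splitting `[x, y]` at the measurable set `{y}` gives
`ξ [x, z] + ξ {y} ≤ ξ [x, y] + ξ [y, z]`; subtracting the halved point masses yields the triangle
inequality for `r_ξ`.
-/

open MeasureTheory

namespace AlgebraicTree

variable {T : Type*} {c : T → T → T → T}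

def interval (c : T → T → T → T) (x y : T) : Set T := {z | c x y z = z}

abbrev componentTopology (c : T → T → T → T) : TopologicalSpace T :=
  TopologicalSpace.generateFrom {S | ∃ x y : T, x ≠ y ∧ S = {z : T | z ≠ x ∧ c x z y ≠ x}}

section

variable (hsym : ∀ x y z : T, c x y z = c y x z ∧ c x y z = c x z y)
  (h2pc : ∀ x y : T, c x y y = y)
include hsym h2pc

theorem c_self_left (x z : T) : c x x z = x := by
  rw [(hsym x x z).2, (hsym x z x).1, h2pc]

theorem interval_self (x : T) : interval c x x = {x} := by
  ext z
  simp only [interval, Set.mem_ofPred_eq, Set.mem_singleton_iff, c_self_left hsym h2pc]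
  exact eq_comm

theorem left_mem_interval (x y : T) : x ∈ interval c x y := by
  show c x y x = x
  rw [(hsym x y x).2, c_self_left hsym h2pc]

end

theorem interval_comm (hsym : ∀ x y z : T, c x y z = c y x z ∧ c x y z = c x z y) (x y : T) :
    interval c x y = interval c y x := by
  ext z
  simp only [interval, Set.mem_ofPred_eq, (hsym x y z).1]

theorem right_mem_interval (h2pc : ∀ x y : T, c x y y = y) (x y : T) : y ∈ interval c x y :=
  h2pc x y

theorem interval_subset_union (hsym : ∀ x y z : T, c x y z = c y x z ∧ c x y z = c x z y)
    (h3pc : ∀ x y z : T, c x y (c x y z) = c x y z)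
    (h4pc : ∀ x1 x2 x3 x4 : T,
      c x1 x2 x3 = c x1 x2 x4 ∨ c x1 x2 x3 = c x1 x3 x4 ∨ c x1 x2 x3 = c x2 x3 x4)
    (x y z : T) : interval c x z ⊆ interval c x y ∪ interval c y z := by
  intro w (hw : c x z w = w)
  rcases h4pc x z w y with h | h | h
  · left
    have hw_eq : w = c x y z := by rw [← hw, h, (hsym x z y).2]
    show c x y w = w
    rw [hw_eq, h3pc]
  · left
    show c x y w = w
    rw [(hsym x y w).2, ← h, hw]
  · right
    show c y z w = w
    rw [(hsym y z w).1, (hsym z y w).2, ← h, hw]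

theorem t1Space_componentTopology (h2pc : ∀ x y : T, c x y y = y) :
    @T1Space T (componentTopology c) := by
  let _ : TopologicalSpace T := componentTopology c
  refine t1Space_iff_exists_open.mpr fun x y hxy => ?_
  refine ⟨{z | z ≠ y ∧ c y z x ≠ y}, ?_, ⟨hxy, by rwa [h2pc]⟩, fun hy => hy.1 rfl⟩
  exact TopologicalSpace.isOpen_generateFrom_of_mem ⟨y, x, hxy.symm, rfl⟩

end AlgebraicTree

theorem MeasureTheory.measure_union_add_le_of_subset_inter {α : Type*} [MeasurableSpace α]
    (μ : Measure α) {s t u : Set α} (hu : MeasurableSet u) (hus : u ⊆ s) (hut : u ⊆ t) :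
    μ (s ∪ t) + μ u ≤ μ s + μ t := by
  have hsplit : μ u + μ (s \ u) = μ s := by
    rw [← measure_inter_add_sdiff s hu, Set.inter_eq_self_of_subset_right hus]
  have hcover : s ∪ t ⊆ (s \ u) ∪ t := by
    rintro w (hw | hw)
    · by_cases hwu : w ∈ u
      exacts [Or.inr (hut hwu), Or.inl ⟨hw, hwu⟩]
    · exact Or.inr hw
  calc μ (s ∪ t) + μ u ≤ μ (s \ u) + μ t + μ u := by
        gcongr; exact (measure_mono hcover).trans (measure_union_le _ _)
    _ = μ s + μ t := by rw [← hsplit]; ring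

open AlgebraicTree in
/-- For a Borel measure `ξ` on an algebraic tree (with the component topology)
that is finite on intervals, `r_ξ(x,y) = ξ([x,y]) - ξ({x})/2 - ξ({y})/2`
defines a pseudometric. -/
theorem rxi_is_pseudometric {T : Type*} (c : T → T → T → T)
    (hsym : ∀ x y z : T, c x y z = c y x z ∧ c x y z = c x z y)
    (h2pc : ∀ x y : T, c x y y = y)
    (h3pc : ∀ x y z : T, c x y (c x y z) = c x y z)
    (h4pc : ∀ x1 x2 x3 x4 : T,
      c x1 x2 x3 = c x1 x2 x4 ∨ c x1 x2 x3 = c x1 x3 x4 ∨ c x1 x2 x3 = c x2 x3 x4)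
    [m : MeasurableSpace T]
    (hm : m = @borel T (TopologicalSpace.generateFrom
      {S : Set T | ∃ x y : T, x ≠ y ∧ S = {z : T | z ≠ x ∧ c x z y ≠ x}}))
    (ξ : Measure T)
    (hfin : ∀ x y : T, ξ {z : T | c x y z = z} < ⊤) :
    (∀ x : T, (ξ {z : T | c x x z = z}).toReal - (ξ {x}).toReal / 2 - (ξ {x}).toReal / 2 = 0) ∧
    (∀ x y : T,
      (ξ {z : T | c x y z = z}).toReal - (ξ {x}).toReal / 2 - (ξ {y}).toReal / 2 =
      (ξ {z : T | c y x z = z}).toReal - (ξ {y}).toReal / 2 - (ξ {x}).toReal / 2) ∧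
    (∀ x y z : T,
      (ξ {w : T | c x z w = w}).toReal - (ξ {x}).toReal / 2 - (ξ {z}).toReal / 2 ≤
      ((ξ {w : T | c x y w = w}).toReal - (ξ {x}).toReal / 2 - (ξ {y}).toReal / 2) +
      ((ξ {w : T | c y z w = w}).toReal - (ξ {y}).toReal / 2 - (ξ {z}).toReal / 2)) := by
  let _ : TopologicalSpace T := componentTopology c
  have : BorelSpace T := ⟨hm⟩
  have := t1Space_componentTopology h2pc
  refine ⟨fun x => ?_, fun x y => ?_, fun x y z => ?_⟩
  · rw [show {z | c x x z = z} = interval c x x from rfl, interval_self hsym h2pc]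
    ring
  · rw [show {z | c x y z = z} = {z | c y x z = z} from interval_comm hsym x y]
    ring
  · have hfin' : ∀ x y, ξ (interval c x y) ≠ ⊤ := fun x y => (hfin x y).ne
    have hy : ξ {y} ≠ ⊤ := interval_self hsym h2pc y ▸ hfin' y y
    have key : ξ (interval c x z) + ξ {y} ≤ ξ (interval c x y) + ξ (interval c y z) :=
      (add_le_add_left (measure_mono (interval_subset_union hsym h3pc h4pc x y z)) _).trans <|
        measure_union_add_le_of_subset_inter ξ (measurableSet_singleton y)
          (Set.singleton_subset_iff.mpr (right_mem_interval h2pc x y))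
          (Set.singleton_subset_iff.mpr (left_mem_interval hsym h2pc y z))
    have keyR := ENNReal.toReal_mono (ENNReal.add_ne_top.mpr ⟨hfin' x y, hfin' y z⟩) key
    rw [ENNReal.toReal_add (hfin' x z) hy, ENNReal.toReal_add (hfin' x y) (hfin' y z)] at keyR
    change (ξ (interval c x z)).toReal - _ - _ ≤
      ((ξ (interval c x y)).toReal - _ - _) + ((ξ (interval c y z)).toReal - _ - _)
    linarith
end

section
/- Let (T,c) be an algebraic tree and ρ ∈ T. Define c_∧(x,y) := c(x,y,ρ). Then (T, c_∧) is a rooted algebraic tree with root ρ: c_∧ is symmetric, satisfies (M1) c_∧(x,x)=x, (M2) c_∧(x, c_∧(y,z)) = c_∧(c_∧(x,y), z), (M3), and c_∧(ρ,x)=ρ for all x ∈ T. -/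
/-!
Write `x ⊓ y` for `c x y ρ` and `x ≤ y` for `x ⊓ y = x`, i.e. `x` lies on the segment from `ρ`
to `y`. Absorption (3pc) makes `x ⊓ y` a lower bound of `x` and `y`, and two applications of the
four-point condition (4pc) show that `≤` is transitive and that `x ⊓ y` is the greatest lower
bound. Hence `⊓` is the meet of a partial order, so it is associative, and (M3) is one more use
of the four-point condition.
-/

structure IsAlgebraicTree {T : Type*} (c : T → T → T → T) : Prop where
  comm_left : ∀ x y z, c x y z = c y x z
  comm_right : ∀ x y z, c x y z = c x z y
  idem : ∀ x y, c x y y = y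
  absorb : ∀ x y z, c x y (c x y z) = c x y z
  four_point : ∀ x₁ x₂ x₃ x₄,
    c x₁ x₂ x₃ = c x₁ x₂ x₄ ∨ c x₁ x₂ x₃ = c x₁ x₃ x₄ ∨ c x₁ x₂ x₃ = c x₂ x₃ x₄

namespace IsAlgebraicTree

variable {T : Type*} {c : T → T → T → T}

theorem meet_comm (hc : IsAlgebraicTree c) (ρ x y : T) : c x y ρ = c y x ρ :=
  hc.comm_left x y ρ

theorem meet_self (hc : IsAlgebraicTree c) (ρ x : T) : c x x ρ = x := by
  rw [hc.comm_right, hc.comm_left, hc.idem]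

theorem root_meet (hc : IsAlgebraicTree c) (ρ x : T) : c ρ x ρ = ρ := by
  rw [hc.comm_left, hc.idem]

theorem meet_meet_cancel_left (hc : IsAlgebraicTree c) (ρ x y : T) :
    c x (c x y ρ) ρ = c x y ρ := by
  rw [hc.comm_right x _ ρ, hc.comm_right x y ρ, hc.absorb]

theorem meet_le_left (hc : IsAlgebraicTree c) (ρ x y : T) : c (c x y ρ) x ρ = c x y ρ := by
  rw [hc.meet_comm, hc.meet_meet_cancel_left]

theorem meet_le_right (hc : IsAlgebraicTree c) (ρ x y : T) : c (c x y ρ) y ρ = c x y ρ := by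
  rw [hc.meet_comm ρ x y, hc.meet_le_left]

theorem le_antisymm (hc : IsAlgebraicTree c) (ρ : T) {x y : T}
    (hxy : c x y ρ = x) (hyx : c y x ρ = y) : x = y := by
  rw [← hxy, hc.meet_comm, hyx]

theorem le_trans (hc : IsAlgebraicTree c) (ρ : T) {x y z : T}
    (hxy : c x y ρ = x) (hyz : c y z ρ = y) : c x z ρ = x := by
  rcases hc.four_point x y ρ z with hxyz | hxz | hyz'
  · rcases hc.four_point x z ρ y with hzy | hxy' | hy
    · rw [hzy, hc.comm_right, ← hxyz, hxy]
    · rw [hxy', hc.comm_right, hxy]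
    · have hxz_eq_y : c x z ρ = y := by rw [hy, hc.comm_right, hc.comm_left, hyz]
      -- absorption gives `y ≤ x`, so `x = y`
      have hyx : c y x ρ = y := by
        rw [← hxz_eq_y, hc.meet_le_left]
      rw [hxz_eq_y, hc.le_antisymm ρ hyx hxy]
  · rw [hc.comm_right, ← hxz, hxy]
  · rw [hxy, hc.comm_right, hyz] at hyz'
    rw [hyz', hyz]

theorem le_meet (hc : IsAlgebraicTree c) (ρ : T) {w x y : T}
    (hwx : c w x ρ = w) (hwy : c w y ρ = w) : c w (c x y ρ) ρ = w := by
  rcases hc.four_point x y ρ w with hu | hu | hu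
  · -- here `c x y ρ = c x y w`, so absorption yields `c w x (c x y ρ) = c x y ρ`
    have hwxu : c w x (c x y ρ) = c x y ρ := by
      rw [hc.comm_left w x, hu, ← hc.comm_right x w y, hc.absorb]
    rcases hc.four_point w x ρ (c x y ρ) with hw | hw | hw
    · rw [hwx, hwxu] at hw
      rw [← hw, hc.meet_self]
    · rw [hwx, hc.comm_right w ρ] at hw
      exact hw.symm
    · rw [hwx, hc.comm_right x ρ, hc.meet_meet_cancel_left] at hw
      rw [← hw, hc.meet_self]
  · rw [hu, hc.comm_right x ρ w, hc.comm_left x w ρ, hwx, hc.meet_self]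
  · rw [hu, hc.comm_right y ρ w, hc.comm_left y w ρ, hwy, hc.meet_self]

theorem meet_assoc (hc : IsAlgebraicTree c) (ρ x y z : T) :
    c x (c y z ρ) ρ = c (c x y ρ) z ρ := by
  set p := c x (c y z ρ) ρ
  set q := c (c x y ρ) z ρ
  have hpyz : c p (c y z ρ) ρ = p := hc.meet_le_right ρ x _
  have hp_le_q : c p q ρ = p :=
    hc.le_meet ρ
      (hc.le_meet ρ (hc.meet_le_left ρ x _) (hc.le_trans ρ hpyz (hc.meet_le_left ρ y z)))
      (hc.le_trans ρ hpyz (hc.meet_le_right ρ y z))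
  have hqxy : c q (c x y ρ) ρ = q := hc.meet_le_left ρ _ z
  have hq_le_p : c q p ρ = q :=
    hc.le_meet ρ (hc.le_trans ρ hqxy (hc.meet_le_left ρ x y))
      (hc.le_meet ρ (hc.le_trans ρ hqxy (hc.meet_le_right ρ x y)) (hc.meet_le_right ρ _ z))
  exact hc.le_antisymm ρ hp_le_q hq_le_p

theorem meet_eq_or_meet_eq_or_meet_eq (hc : IsAlgebraicTree c) (ρ x y z : T) :
    c x y ρ = c x z ρ ∨ c x y ρ = c y z ρ ∨ c x z ρ = c y z ρ := by
  rcases hc.four_point x y ρ z with hxyz | hxz | hyz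
  · rcases hc.four_point x z ρ y with hxzy | hxy | hzy
    · rw [hxyz, hxzy, hc.comm_right x z y]
      exact Or.inl rfl
    · rw [hxy, hc.comm_right x ρ y]
      exact Or.inl rfl
    · rw [hzy, hc.comm_right z ρ y, hc.comm_left z y ρ]
      exact Or.inr (Or.inr rfl)
  · rw [hxz, hc.comm_right x ρ z]
    exact Or.inl rfl
  · rw [hyz, hc.comm_right y ρ z]
    exact Or.inr (Or.inl rfl)

theorem meet_eq_meet_meet_of_meet_eq (hc : IsAlgebraicTree c) (ρ : T) {x y z : T}
    (h : c x y ρ = c x z ρ) : c x y ρ = c (c x y ρ) (c y z ρ) ρ := by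
  refine (hc.le_meet ρ (hc.meet_le_right ρ x y) ?_).symm
  rw [h, hc.meet_le_right]

end IsAlgebraicTree

/-- Distinguishing a root `ρ` in an algebraic tree `(T,c)` and setting
`c_∧(x,y) := c x y ρ` yields a rooted algebraic tree with root `ρ`. -/
theorem algebraic_tree_to_rooted {T : Type*} (c : T → T → T → T)
    (hsym : ∀ x y z : T, c x y z = c y x z ∧ c x y z = c x z y)
    (h2pc : ∀ x y : T, c x y y = y)
    (h3pc : ∀ x y z : T, c x y (c x y z) = c x y z)
    (h4pc : ∀ x1 x2 x3 x4 : T,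
      c x1 x2 x3 = c x1 x2 x4 ∨ c x1 x2 x3 = c x1 x3 x4 ∨ c x1 x2 x3 = c x2 x3 x4)
    (ρ : T) :
    (∀ x y : T, c x y ρ = c y x ρ) ∧
    (∀ x : T, c x x ρ = x) ∧
    (∀ x y z : T, c x (c y z ρ) ρ = c (c x y ρ) z ρ) ∧
    (∀ x y z : T,
      (c x y ρ = c x z ρ ∨ c x y ρ = c y z ρ ∨ c x z ρ = c y z ρ) ∧
      (c x y ρ = c x z ρ → c x y ρ = c (c x y ρ) (c y z ρ) ρ)) ∧
    (∀ x : T, c ρ x ρ = ρ) := by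
  have hc : IsAlgebraicTree c :=
    ⟨fun x y z => (hsym x y z).1, fun x y z => (hsym x y z).2, h2pc, h3pc, h4pc⟩
  exact ⟨hc.meet_comm ρ, hc.meet_self ρ, hc.meet_assoc ρ,
    fun x y z => ⟨hc.meet_eq_or_meet_eq_or_meet_eq ρ x y z, hc.meet_eq_meet_meet_of_meet_eq ρ⟩,
    hc.root_meet ρ⟩
end

section
/- Let I be the collection of all intervals [x,y] of an algebraic tree (T,c). Then the Vapnik–Chervonenkis dimension of I is at most 2: no 3-element subset of T is shattered by I. -/
/-!
The median of three points of an interval `[a, b]` of an algebraic tree is one of them, say `x`,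
so `x ∈ [y, z]`. Intervals are convex, so every interval containing `y` and
`z` also contains `x`, and the pair `{y, z}` is not cut out of `{x, y, z}` by any interval.
-/

namespace AlgebraicTree

variable {T : Type*} (c : T → T → T → T)
variable (hsym : ∀ x y z : T, c x y z = c y x z ∧ c x y z = c x z y)
variable (h3pc : ∀ x y z : T, c x y (c x y z) = c x y z)
variable (h4pc : ∀ x1 x2 x3 x4 : T,
      c x1 x2 x3 = c x1 x2 x4 ∨ c x1 x2 x3 = c x1 x3 x4 ∨ c x1 x2 x3 = c x2 x3 x4)

include hsym h3pc

theorem median_mem_interval_left_s18 (a b u : T) : c a u (c a b u) = c a b u := by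
  rw [(hsym a b u).2]
  exact h3pc a u b

include h4pc

theorem median_eq_or_eq_of_mem_interval {a b u v : T} (hu : c a b u = u) (hv : c a b v = v) :
    c a u v = u ∨ c a u v = v := by
  rcases h4pc a u v b with h | h | h
  · left; rw [h, ← (hsym a b u).2, hu]
  · right; rw [h, ← (hsym a b v).2, hv]
  · left
    set m := c a u v
    have hm_au : c a u m = m := h3pc a u v
    have hm_bu : c b u m = m := by
      rw [show m = c b u v by grind]
      exact h3pc b u v
    rcases h4pc a b u m with g | g | g
    · -- `m ∈ [a, u]` and `u = c a b m ∈ [a, m]` force `m = u`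
      have hu_am : c a m u = u := by
        simpa [g.symm.trans hu] using median_mem_interval_left_s18 c hsym h3pc a b m
      rw [← hu_am, (hsym a m u).2, hm_au]
    · rw [← hm_au, ← g, hu]
    · rw [← hm_bu, ← g, hu]

theorem median_eq_of_mem_interval {a b x y z : T} (hx : c a b x = x) (hy : c a b y = y)
    (hz : c a b z = z) : c x y z = x ∨ c x y z = y ∨ c x y z = z := by
  have median := @median_eq_or_eq_of_mem_interval _ c hsym h3pc h4pc a b
  rcases h4pc x y z a with h | h | h
  · rw [h, show c x y a = c a x y by grind]
    rcases median hx hy with g | g <;> simp [g]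
  · rw [h, show c x z a = c a x z by grind]
    rcases median hx hz with g | g <;> simp [g]
  · rw [h, show c y z a = c a y z by grind]
    rcases median hy hz with g | g <;> simp [g]

theorem mem_interval_or_mem_interval {x z y : T} (hy : c x z y = y) (p : T) :
    c x p y = y ∨ c p z y = y := by
  rcases h4pc x z y p with h | h | h
  · left
    simpa [← h, hy] using median_mem_interval_left_s18 c hsym h3pc x z p
  · left; rw [(hsym x p y).2, ← h, hy]
  · right; rw [show c p z y = c z y p by grind, ← h, hy]

theorem interval_subset_of_mem {p q x y : T} (hx : c p q x = x) (hy : c p x y = y) :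
    c p q y = y := by
  rcases h4pc p x y q with h | h | h
  · obtain rfl : y = x := by rw [← hy, h, (hsym p x q).2, hx]
    exact hx
  · rw [(hsym p q y).2, ← h, hy]
  · rcases h4pc p q y x with g | g | g
    · -- `x = c p q y ∈ [p, y]` and `y ∈ [p, x]` force `x = y`
      have hx_py : c p y x = x := by
        simpa [g, hx] using median_mem_interval_left_s18 c hsym h3pc p q y
      rw [g, hx, ← hx_py, (hsym p y x).2, hy]
    · rw [g, (hsym p y x).2, hy]
    · rw [g, show c q y x = c x y q by grind, ← h, hy]

theorem interval_convex {p q x y z : T} (hx : c p q x = x) (hz : c p q z = z)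
    (hy : c x z y = y) : c p q y = y := by
  rcases mem_interval_or_mem_interval c hsym h3pc h4pc hy p with h | h
  · exact interval_subset_of_mem c hsym h3pc h4pc hx (by rwa [(hsym p x y).1])
  · exact interval_subset_of_mem c hsym h3pc h4pc hz h

theorem not_trace_eq_pair_of_median_eq {x y z : T} (hm : c x y z = x) (hxy : x ≠ y)
    (hxz : x ≠ z) : ¬ ∃ a b : T, ({x, y, z} : Set T) ∩ {w : T | c a b w = w} = {y, z} := by
  rintro ⟨a, b, hab⟩
  have mem_interval : ∀ w ∈ ({y, z} : Set T), c a b w = w := fun w hw => (hab.symm ▸ hw).2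
  have hx : c a b x = x := by
    refine interval_convex c hsym h3pc h4pc (mem_interval y (by simp)) (mem_interval z (by simp)) ?_
    exact (show c y z x = c x y z by grind).trans hm
  have : x ∈ ({y, z} : Set T) := hab ▸ ⟨by simp, hx⟩
  simp_all

end AlgebraicTree

open AlgebraicTree in
theorem intervals_vc_dimension_le_two_general {T : Type*} (c : T → T → T → T)
    (hsym : ∀ x y z : T, c x y z = c y x z ∧ c x y z = c x z y)
    (h3pc : ∀ x y z : T, c x y (c x y z) = c x y z)
    (h4pc : ∀ x1 x2 x3 x4 : T,
      c x1 x2 x3 = c x1 x2 x4 ∨ c x1 x2 x3 = c x1 x3 x4 ∨ c x1 x2 x3 = c x2 x3 x4) :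
    ∀ x y z : T, x ≠ y → y ≠ z → x ≠ z →
      ¬ (∀ s : Set T, s ⊆ ({x, y, z} : Set T) →
        ∃ a b : T, ({x, y, z} : Set T) ∩ {w : T | c a b w = w} = s) := by
  intro x y z hxy hyz hxz hshat
  obtain ⟨a, b, hab⟩ := hshat {x, y, z} subset_rfl
  have mem_interval : ∀ w ∈ ({x, y, z} : Set T), c a b w = w := fun w hw => (hab.symm ▸ hw).2
  rcases median_eq_of_mem_interval c hsym h3pc h4pc (mem_interval x (by simp))
    (mem_interval y (by simp)) (mem_interval z (by simp)) with hm | hm | hm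
  · exact not_trace_eq_pair_of_median_eq c hsym h3pc h4pc hm hxy hxz
      (hshat {y, z} (by simp))
  · refine not_trace_eq_pair_of_median_eq c hsym h3pc h4pc (y := x) (z := z)
      ((hsym x y z).1 ▸ hm) hxy.symm hyz ?_
    rw [Set.insert_comm]
    exact hshat {x, z} (by simp [Set.insert_subset_iff])
  · refine not_trace_eq_pair_of_median_eq c hsym h3pc h4pc (y := x) (z := y)
      ((show c z x y = c x y z by grind).trans hm) hxz.symm hyz.symm ?_
    rw [Set.insert_comm, Set.pair_comm]
    exact hshat {x, y} (by simp [Set.insert_subset_iff])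

/-- The family of intervals of an algebraic tree has VC dimension at most 2:
no 3-element set is shattered by intervals. -/
theorem intervals_vc_dimension_le_two {T : Type*} (c : T → T → T → T)
    (hsym : ∀ x y z : T, c x y z = c y x z ∧ c x y z = c x z y)
    (h2pc : ∀ x y : T, c x y y = y)
    (h3pc : ∀ x y z : T, c x y (c x y z) = c x y z)
    (h4pc : ∀ x1 x2 x3 x4 : T,
      c x1 x2 x3 = c x1 x2 x4 ∨ c x1 x2 x3 = c x1 x3 x4 ∨ c x1 x2 x3 = c x2 x3 x4) :
    ∀ x y z : T, x ≠ y → y ≠ z → x ≠ z →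
      ¬ (∀ s : Set T, s ⊆ ({x, y, z} : Set T) →
        ∃ a b : T, ({x, y, z} : Set T) ∩ {w : T | c a b w = w} = s) :=
  intervals_vc_dimension_le_two_general c hsym h3pc h4pc
end
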